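/- Let γ, a, b ∈ ℝ and set c = a², c′ = b², θ = (c − c′)² + 2γ²cc′(c + c′). Suppose the real numbers x_r, x_pr, x_rp, x_p and ρ_r, ρ_pr, ρ_rp, ρ_p satisfy the four linear equations: b·x_rp + a·x_pr = ρ_r; −a·x_r + γc·x_pr + b·x_p = ρ_pr; −b·x_r + γc′·x_rp + a·x_p = ρ_rp; −a·x_rp − b·x_pr + γ(c + c′)·x_p = ρ_p. Then θ·x_p = 2γcc′·ρ_p + γab(c + c′)·ρ_r − (c − c′)b·ρ_pr + (c − c′)a·ρ_rp. In particular, if a, b, γ > 0 (so θ > 0), then x_p = Θ_p(c,c′)·ρ_p + Θ_r(c,c′)·ρ_r − Θ_pr(c,c′)·ρ_pr − Θ_pr(c′,c)·ρ_rp, where Θ_p(c,c′) = 2γcc′/θ, Θ_r(c,c′) = γ√(cc′)(c + c′)/θ, and Θ_pr(c,c′) = (c − c′)√(c′)/θ. -/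

import Mathlib

open Real

noncomputable section

/-- `θ(c,c′) = (c − c′)² + 2γ²cc′(c + c′)`. -/
def thetaDen (γ c c' : ℝ) : ℝ := (c - c') ^ 2 + 2 * γ ^ 2 * c * c' * (c + c')

/-- `Θ_p(c,c′) = 2γcc′/θ(c,c′)`. -/
def ThetaP (γ c c' : ℝ) : ℝ := 2 * γ * c * c' / thetaDen γ c c'

/-- `Θ_r(c,c′) = γ√(cc′)(c + c′)/θ(c,c′)`. -/
def ThetaR (γ c c' : ℝ) : ℝ := γ * Real.sqrt (c * c') * (c + c') / thetaDen γ c c'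

/-- `Θ_pr(c,c′) = (c − c′)√(c′)/θ(c,c′)`. -/
def ThetaPR (γ c c' : ℝ) : ℝ := (c - c') * Real.sqrt c' / thetaDen γ c c'

theorem thetaDen_comm (γ c c' : ℝ) : thetaDen γ c c' = thetaDen γ c' c := by
  unfold thetaDen
  ring

theorem thetaDen_pos {γ c c' : ℝ} (hγ : γ ≠ 0) (hc : 0 < c) (hc' : 0 < c') :
    0 < thetaDen γ c c' := by
  unfold thetaDen
  positivity

theorem ThetaR_sq_sq (γ : ℝ) {a b : ℝ} (ha : 0 ≤ a) (hb : 0 ≤ b) :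
    ThetaR γ (a ^ 2) (b ^ 2) = γ * a * b * (a ^ 2 + b ^ 2) / thetaDen γ (a ^ 2) (b ^ 2) := by
  rw [ThetaR, ← mul_pow, sqrt_sq (mul_nonneg ha hb), mul_assoc γ a b]

theorem ThetaPR_sq (γ c : ℝ) {b : ℝ} (hb : 0 ≤ b) :
    ThetaPR γ c (b ^ 2) = (c - b ^ 2) * b / thetaDen γ c (b ^ 2) := by
  rw [ThetaPR, sqrt_sq hb]

/-- Resolution of the per-mode covariance system: with `c = a²`,
`c′ = b²`, the four linear equations determine `x_p` through the kernels `Θ`. -/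
theorem covariance_resolution (γ a b xr xpr xrp xp ρr ρpr ρrp ρp : ℝ)
    (h1 : b * xrp + a * xpr = ρr)
    (h2 : -a * xr + γ * a ^ 2 * xpr + b * xp = ρpr)
    (h3 : -b * xr + γ * b ^ 2 * xrp + a * xp = ρrp)
    (h4 : -a * xrp - b * xpr + γ * (a ^ 2 + b ^ 2) * xp = ρp) :
    thetaDen γ (a ^ 2) (b ^ 2) * xp
      = 2 * γ * a ^ 2 * b ^ 2 * ρp + γ * a * b * (a ^ 2 + b ^ 2) * ρr
        - (a ^ 2 - b ^ 2) * b * ρpr + (a ^ 2 - b ^ 2) * a * ρrp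
    ∧ (0 < a → 0 < b → 0 < γ →
        xp = ThetaP γ (a ^ 2) (b ^ 2) * ρp + ThetaR γ (a ^ 2) (b ^ 2) * ρr
          - ThetaPR γ (a ^ 2) (b ^ 2) * ρpr - ThetaPR γ (b ^ 2) (a ^ 2) * ρrp) := by
  -- Weighting each equation by the coefficient of its source term eliminates `xr`, `xpr`, `xrp`.
  have elim : thetaDen γ (a ^ 2) (b ^ 2) * xp
      = 2 * γ * a ^ 2 * b ^ 2 * ρp + γ * a * b * (a ^ 2 + b ^ 2) * ρr
        - (a ^ 2 - b ^ 2) * b * ρpr + (a ^ 2 - b ^ 2) * a * ρrp := by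
    unfold thetaDen
    linear_combination (2 * γ * a ^ 2 * b ^ 2) * h4 + (γ * a * b * (a ^ 2 + b ^ 2)) * h1
      - ((a ^ 2 - b ^ 2) * b) * h2 + ((a ^ 2 - b ^ 2) * a) * h3
  refine ⟨elim, fun ha hb hγ => ?_⟩
  have hθ : thetaDen γ (a ^ 2) (b ^ 2) ≠ 0 := (thetaDen_pos hγ.ne' (by positivity) (by positivity)).ne'
  rw [ThetaP, ThetaR_sq_sq γ ha.le hb.le, ThetaPR_sq γ _ hb.le, ThetaPR_sq γ _ ha.le,
    thetaDen_comm γ (b ^ 2)]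
  field_simp
  linear_combination elim
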